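/- arXiv:2307.16329 — 3 statements merged into one kernel-verified Lean document; each statement's English description precedes it below -/
import Mathlib

section
/- Let ρ ∈ P(G) with γ_Poincaré(ρ) > 0 and f ∈ ℝⁿ with Σᵢ fᵢ = 0. Then there exists φ ∈ ℝⁿ with f = −div_ρ(∇_G φ). Moreover, for any skew-symmetric v with f = −div_ρ(v), one has ‖∇_G φ‖²_ρ ≤ ‖v‖²_ρ. -/
open Finset MeasureTheory

/-- The probability simplex `P(G)`. -/
def IsProb {n : ℕ} (ρ : Fin n → ℝ) : Prop := (∀ i, 0 ≤ ρ i) ∧ ∑ i, ρ i = 1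

/-- Skew-symmetric matrices `𝕊^{n×n}`. -/
def Skew {n : ℕ} (v : Fin n → Fin n → ℝ) : Prop := ∀ i j, v i j = - v j i

/-- The weighted inner product `(v,w)_ρ = (1/2) ∑_{(i,j)∈E} g(ρ_i,ρ_j) v_{ij} w_{ij}`. -/
noncomputable def gInner {n : ℕ} (ω : Fin n → Fin n → ℝ) (g : ℝ → ℝ → ℝ)
    (ρ : Fin n → ℝ) (v w : Fin n → Fin n → ℝ) : ℝ :=
  (1/2) * ∑ i, ∑ j, (if ω i j ≠ 0 then g (ρ i) (ρ j) * v i j * w i j else 0)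

/-- The graph gradient `(∇_G φ)_{ij} = √ω_{ij} (φ_i - φ_j)`. -/
noncomputable def gradG {n : ℕ} (ω : Fin n → Fin n → ℝ) (φ : Fin n → ℝ) :
    Fin n → Fin n → ℝ :=
  fun i j => Real.sqrt (ω i j) * (φ i - φ j)

/-- The graph divergence `⟨div_ρ(v)⟩_i = ∑_{j∈N(i)} √ω_{ij} g(ρ_i,ρ_j) v_{ji}`. -/
noncomputable def gdiv {n : ℕ} (ω : Fin n → Fin n → ℝ) (g : ℝ → ℝ → ℝ)
    (ρ : Fin n → ℝ) (v : Fin n → Fin n → ℝ) : Fin n → ℝ :=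
  fun i => ∑ j, Real.sqrt (ω i j) * g (ρ i) (ρ j) * v j i

/-- The euclidean pairing on `ℝ^n`. -/
def dotl2 {n : ℕ} (a b : Fin n → ℝ) : ℝ := ∑ i, a i * b i

/-- The Poincaré constant
`γ(ρ) = inf { (1/2)∑_{(i,j)∈E} g(ρ_i,ρ_j)(β_i-β_j)² ω_{ij} : ∑β_i = 0, ∑β_i² = 1 }`. -/
noncomputable def gammaP {n : ℕ} (ω : Fin n → Fin n → ℝ) (g : ℝ → ℝ → ℝ)
    (ρ : Fin n → ℝ) : ℝ :=
  sInf { x | ∃ β : Fin n → ℝ, ∑ i, β i = 0 ∧ ∑ i, (β i)^2 = 1 ∧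
    x = (1/2) * ∑ i, ∑ j, g (ρ i) (ρ j) * (β i - β j)^2 * ω i j }

/-!
The operator `φ ↦ -div_ρ(∇_G φ)` preserves mean-zero vectors, and by discrete
integration by parts its quadratic form `(φ, -div_ρ ∇_G φ)` is the Dirichlet energy `E(φ)`
appearing in `γ(ρ)`. The Poincaré inequality `γ(ρ) ‖β‖² ≤ E(β)` then makes it injective, hence
surjective, on the finite-dimensional space of mean-zero vectors, which yields `φ`. For
minimality, integration by parts gives `⟨∇_G φ, v⟩_ρ = (φ, f) = ‖∇_G φ‖²_ρ`, so that
`‖v‖²_ρ = ‖∇_G φ‖²_ρ + ‖v - ∇_G φ‖²_ρ`.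
-/

section
variable {n : ℕ} (ω : Fin n → Fin n → ℝ) (g : ℝ → ℝ → ℝ) (ρ : Fin n → ℝ)

noncomputable def dirichletEnergy (φ : Fin n → ℝ) : ℝ :=
  (1/2) * ∑ i, ∑ j, g (ρ i) (ρ j) * (φ i - φ j)^2 * ω i j

noncomputable def negDivGrad : (Fin n → ℝ) →ₗ[ℝ] (Fin n → ℝ) where
  toFun φ := -gdiv ω g ρ (gradG ω φ)
  map_add' φ ψ := by
    funext i
    simp only [gdiv, gradG, Pi.add_apply, Pi.neg_apply, ← Finset.sum_add_distrib, ← neg_add]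
    exact congrArg _ (Finset.sum_congr rfl fun j _ => by ring)
  map_smul' c φ := by
    funext i
    simp only [gdiv, gradG, Pi.smul_apply, Pi.neg_apply, smul_eq_mul, RingHom.id_apply,
      Finset.mul_sum, ← Finset.sum_neg_distrib]
    exact Finset.sum_congr rfl fun j _ => by ring

lemma negDivGrad_apply (φ : Fin n → ℝ) : negDivGrad ω g ρ φ = -gdiv ω g ρ (gradG ω φ) := rfl

variable {ω g ρ}

lemma gradG_skew (hωsym : ∀ i j, ω i j = ω j i) (φ : Fin n → ℝ) : Skew (gradG ω φ) := by
  intro i j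
  simp only [gradG, hωsym i j]
  ring

/-- Discrete integration by parts: `-div_ρ` is the adjoint of `∇_G`. -/
lemma gInner_gradG_left (hωsym : ∀ i j, ω i j = ω j i) (hgsym : ∀ s t, g s t = g t s)
    {v : Fin n → Fin n → ℝ} (hv : Skew v) (φ : Fin n → ℝ) :
    gInner ω g ρ (gradG ω φ) v = dotl2 φ (-gdiv ω g ρ v) := by
  set P := ∑ i, ∑ j, g (ρ i) (ρ j) * √(ω i j) * (φ i * v i j)
  have hleft : dotl2 φ (-gdiv ω g ρ v) = P := by
    refine Finset.sum_congr rfl fun i _ => ?_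
    simp only [gdiv, Pi.neg_apply, mul_neg, Finset.mul_sum, ← Finset.sum_neg_distrib]
    exact Finset.sum_congr rfl fun j _ => by rw [hv j i]; ring
  have hswap : ∑ i, ∑ j, g (ρ i) (ρ j) * √(ω i j) * (φ j * v i j) = -P := by
    rw [Finset.sum_comm, ← Finset.sum_neg_distrib]
    refine Finset.sum_congr rfl fun i _ => ?_
    rw [← Finset.sum_neg_distrib]
    exact Finset.sum_congr rfl fun j _ => by rw [hωsym j i, hgsym (ρ j) (ρ i), hv j i]; ring
  -- the indicator `ω i j ≠ 0` in `gInner` is redundant here, since `√0 = 0`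
  have hsplit : gInner ω g ρ (gradG ω φ) v = (1/2) * (P -
      ∑ i, ∑ j, g (ρ i) (ρ j) * √(ω i j) * (φ j * v i j)) := by
    simp only [gInner, gradG, P, ← Finset.sum_sub_distrib]
    refine congrArg _ (Finset.sum_congr rfl fun i _ => Finset.sum_congr rfl fun j _ => ?_)
    split_ifs with h
    · ring
    · rw [not_not.mp h, Real.sqrt_zero]; ring
  rw [hsplit, hswap, hleft]
  ring

lemma sum_gdiv_eq_zero (hωsym : ∀ i j, ω i j = ω j i) (hgsym : ∀ s t, g s t = g t s)
    {v : Fin n → Fin n → ℝ} (hv : Skew v) : ∑ i, gdiv ω g ρ v i = 0 := by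
  have h := gInner_gradG_left (ρ := ρ) hωsym hgsym hv 1
  simp only [gradG, Pi.one_apply, sub_self, mul_zero, gInner, zero_mul, ite_self,
    Finset.sum_const_zero, dotl2, Pi.neg_apply, one_mul, Finset.sum_neg_distrib] at h
  linarith

lemma gInner_gradG_self (hωnonneg : ∀ i j, 0 ≤ ω i j) (φ : Fin n → ℝ) :
    gInner ω g ρ (gradG ω φ) (gradG ω φ) = dirichletEnergy ω g ρ φ := by
  refine congrArg _ (Finset.sum_congr rfl fun i _ => Finset.sum_congr rfl fun j _ => ?_)
  split_ifs with h
  · simp only [gradG]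
    linear_combination g (ρ i) (ρ j) * (φ i - φ j) ^ 2 * Real.mul_self_sqrt (hωnonneg i j)
  · rw [not_not.mp h, mul_zero]

lemma dotl2_negDivGrad_self (hωsym : ∀ i j, ω i j = ω j i) (hωnonneg : ∀ i j, 0 ≤ ω i j)
    (hgsym : ∀ s t, g s t = g t s) (φ : Fin n → ℝ) :
    dotl2 φ (negDivGrad ω g ρ φ) = dirichletEnergy ω g ρ φ := by
  rw [negDivGrad_apply, ← gInner_gradG_left hωsym hgsym (gradG_skew hωsym φ),
    gInner_gradG_self hωnonneg]

lemma dirichletEnergy_nonneg (hωnonneg : ∀ i j, 0 ≤ ω i j) (hgnonneg : ∀ s t, 0 ≤ g s t)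
    (φ : Fin n → ℝ) : 0 ≤ dirichletEnergy ω g ρ φ :=
  mul_nonneg (by norm_num) <| Finset.sum_nonneg fun i _ => Finset.sum_nonneg fun j _ =>
    mul_nonneg (mul_nonneg (hgnonneg _ _) (sq_nonneg _)) (hωnonneg i j)

lemma dirichletEnergy_smul (c : ℝ) (φ : Fin n → ℝ) :
    dirichletEnergy ω g ρ (c • φ) = c ^ 2 * dirichletEnergy ω g ρ φ := by
  simp only [dirichletEnergy, Pi.smul_apply, smul_eq_mul, Finset.mul_sum]
  exact Finset.sum_congr rfl fun i _ => Finset.sum_congr rfl fun j _ => by ring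

lemma gammaP_mul_sum_sq_le (hωnonneg : ∀ i j, 0 ≤ ω i j) (hgnonneg : ∀ s t, 0 ≤ g s t)
    {β : Fin n → ℝ} (hβ : ∑ i, β i = 0) :
    gammaP ω g ρ * ∑ i, β i ^ 2 ≤ dirichletEnergy ω g ρ β := by
  set c := ∑ i, β i ^ 2
  rcases (Finset.sum_nonneg fun i _ => sq_nonneg (β i) : 0 ≤ c).eq_or_lt with hc | hc
  · rw [show c = 0 from hc.symm, mul_zero]
    exact dirichletEnergy_nonneg hωnonneg hgnonneg β
  have hbdd : BddBelow {x | ∃ β : Fin n → ℝ, ∑ i, β i = 0 ∧ ∑ i, β i ^ 2 = 1 ∧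
      x = dirichletEnergy ω g ρ β} := by
    refine ⟨0, ?_⟩
    rintro _ ⟨β, -, -, rfl⟩
    exact dirichletEnergy_nonneg hωnonneg hgnonneg β
  have hsq : (√c)⁻¹ ^ 2 = c⁻¹ := by rw [inv_pow, Real.sq_sqrt hc.le]
  have hmem : c⁻¹ * dirichletEnergy ω g ρ β ∈ {x | ∃ β : Fin n → ℝ, ∑ i, β i = 0 ∧
      ∑ i, β i ^ 2 = 1 ∧ x = dirichletEnergy ω g ρ β} := by
    refine ⟨(√c)⁻¹ • β, ?_, ?_, ?_⟩
    · simp only [Pi.smul_apply, smul_eq_mul, ← Finset.mul_sum, hβ, mul_zero]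
    · simp only [Pi.smul_apply, smul_eq_mul, mul_pow, ← Finset.mul_sum, hsq]
      exact inv_mul_cancel₀ hc.ne'
    · rw [dirichletEnergy_smul, hsq]
  have hγ : gammaP ω g ρ ≤ c⁻¹ * dirichletEnergy ω g ρ β := csInf_le hbdd hmem
  rwa [← le_div_iff₀ hc, ← inv_mul_eq_div]

lemma gInner_self_nonneg (hgnonneg : ∀ s t, 0 ≤ g s t) (w : Fin n → Fin n → ℝ) :
    0 ≤ gInner ω g ρ w w :=
  mul_nonneg (by norm_num) <| Finset.sum_nonneg fun i _ => Finset.sum_nonneg fun j _ => by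
    split_ifs
    · rw [mul_assoc]
      exact mul_nonneg (hgnonneg _ _) (mul_self_nonneg _)
    · exact le_rfl

lemma gInner_self_le_of_gInner_eq (hgnonneg : ∀ s t, 0 ≤ g s t) {a v : Fin n → Fin n → ℝ}
    (h : gInner ω g ρ a v = gInner ω g ρ a a) : gInner ω g ρ a a ≤ gInner ω g ρ v v := by
  have hexpand : gInner ω g ρ (v - a) (v - a) =
      gInner ω g ρ v v - 2 * gInner ω g ρ a v + gInner ω g ρ a a := by
    have hterm : ∀ i j, (if ω i j ≠ 0 then g (ρ i) (ρ j) * (v - a) i j * (v - a) i j else 0) =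
        (if ω i j ≠ 0 then g (ρ i) (ρ j) * v i j * v i j else 0)
          - 2 * (if ω i j ≠ 0 then g (ρ i) (ρ j) * a i j * v i j else 0)
          + (if ω i j ≠ 0 then g (ρ i) (ρ j) * a i j * a i j else 0) := by
      intro i j
      simp only [Pi.sub_apply]
      split_ifs <;> ring
    simp only [gInner, hterm, Finset.sum_add_distrib, Finset.sum_sub_distrib, ← Finset.mul_sum]
    ring
  linarith [gInner_self_nonneg (ω := ω) (ρ := ρ) hgnonneg (v - a)]

lemma eq_zero_of_negDivGrad_eq_zero (hωsym : ∀ i j, ω i j = ω j i)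
    (hωnonneg : ∀ i j, 0 ≤ ω i j) (hgsym : ∀ s t, g s t = g t s)
    (hgnonneg : ∀ s t, 0 ≤ g s t) (hγ : 0 < gammaP ω g ρ) {x : Fin n → ℝ}
    (hx : ∑ i, x i = 0) (hLx : negDivGrad ω g ρ x = 0) : x = 0 := by
  have hpoinc := gammaP_mul_sum_sq_le (ρ := ρ) hωnonneg hgnonneg hx
  rw [← dotl2_negDivGrad_self hωsym hωnonneg hgsym, hLx] at hpoinc
  simp only [dotl2, Pi.zero_apply, mul_zero, Finset.sum_const_zero] at hpoinc
  have hsq : ∑ i, x i ^ 2 = 0 :=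
    le_antisymm (nonpos_of_mul_nonpos_right hpoinc hγ) (Finset.sum_nonneg fun i _ => sq_nonneg _)
  funext i
  exact pow_eq_zero_iff two_ne_zero |>.mp <|
    (Finset.sum_eq_zero_iff_of_nonneg fun i _ => sq_nonneg (x i)).mp hsq i (Finset.mem_univ i)

def meanZero (n : ℕ) : Submodule ℝ (Fin n → ℝ) := LinearMap.ker (∑ i : Fin n, LinearMap.proj i)

lemma mem_meanZero {x : Fin n → ℝ} : x ∈ meanZero n ↔ ∑ i, x i = 0 := by
  simp [meanZero]

lemma exists_negDivGrad_eq (hωsym : ∀ i j, ω i j = ω j i)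
    (hωnonneg : ∀ i j, 0 ≤ ω i j) (hgsym : ∀ s t, g s t = g t s)
    (hgnonneg : ∀ s t, 0 ≤ g s t) (hγ : 0 < gammaP ω g ρ) {f : Fin n → ℝ}
    (hf : ∑ i, f i = 0) : ∃ φ, negDivGrad ω g ρ φ = f := by
  have hmaps : ∀ x ∈ meanZero n, negDivGrad ω g ρ x ∈ meanZero n := fun x _ => by
    rw [mem_meanZero, negDivGrad_apply]
    simp only [Pi.neg_apply, Finset.sum_neg_distrib,
      sum_gdiv_eq_zero hωsym hgsym (gradG_skew hωsym x), neg_zero]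
  set L := (negDivGrad ω g ρ).restrict hmaps
  have hinj : Function.Injective L := by
    refine (injective_iff_map_eq_zero L).mpr fun x hx => Subtype.ext ?_
    exact eq_zero_of_negDivGrad_eq_zero hωsym hωnonneg hgsym hgnonneg hγ
      (mem_meanZero.mp x.2) (congrArg Subtype.val hx)
  obtain ⟨φ, hφ⟩ := LinearMap.injective_iff_surjective.mp hinj ⟨f, mem_meanZero.mpr hf⟩
  exact ⟨φ, congrArg Subtype.val hφ⟩

end

theorem stmt4_general {n : ℕ} (ω : Fin n → Fin n → ℝ) (g : ℝ → ℝ → ℝ)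
    (hωsym : ∀ i j, ω i j = ω j i) (hωnonneg : ∀ i j, 0 ≤ ω i j)
    (hgsym : ∀ s t, g s t = g t s) (hgnonneg : ∀ s t, 0 ≤ g s t)
    (ρ : Fin n → ℝ) (hγ : 0 < gammaP ω g ρ)
    (f : Fin n → ℝ) (hf : ∑ i, f i = 0) :
    ∃ φ : Fin n → ℝ,
      f = (fun i => -(gdiv ω g ρ (gradG ω φ) i)) ∧
      ∀ v : Fin n → Fin n → ℝ, Skew v → f = (fun i => -(gdiv ω g ρ v i)) →
        gInner ω g ρ (gradG ω φ) (gradG ω φ) ≤ gInner ω g ρ v v := by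
  obtain ⟨φ, hφ⟩ := exists_negDivGrad_eq hωsym hωnonneg hgsym hgnonneg hγ hf
  refine ⟨φ, hφ.symm, fun v hv hfv => gInner_self_le_of_gInner_eq hgnonneg ?_⟩
  -- both sides equal `(φ, f)_{ℓ²}`
  rw [gInner_gradG_left hωsym hgsym hv, gInner_gradG_left hωsym hgsym (gradG_skew hωsym φ)]
  exact congrArg (dotl2 φ) (hfv.symm.trans hφ.symm)

/-- solvability of `f = -div_ρ(∇_G φ)` and minimality of the gradient
representative. -/
theorem stmt4 {n : ℕ} (ω : Fin n → Fin n → ℝ) (g : ℝ → ℝ → ℝ)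
    (hωsym : ∀ i j, ω i j = ω j i) (hωnonneg : ∀ i j, 0 ≤ ω i j)
    (hgsym : ∀ s t, g s t = g t s) (hgnonneg : ∀ s t, 0 ≤ g s t)
    (ρ : Fin n → ℝ) (hρ : IsProb ρ) (hγ : 0 < gammaP ω g ρ)
    (f : Fin n → ℝ) (hf : ∑ i, f i = 0) :
    ∃ φ : Fin n → ℝ,
      f = (fun i => -(gdiv ω g ρ (gradG ω φ) i)) ∧
      ∀ v : Fin n → Fin n → ℝ, Skew v → f = (fun i => -(gdiv ω g ρ v i)) →
        gInner ω g ρ (gradG ω φ) (gradG ω φ) ≤ gInner ω g ρ v v :=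
  stmt4_general ω g hωsym hωnonneg hgsym hgnonneg ρ hγ f hf
end

section
/- Assume ∫₀¹ dr/√(g(r,1−r)) < ∞. Then for any ρ⁰, ρ¹ ∈ P(G) on a connected graph G, there exists a solution (σ, m) of the continuity equation σ̇ + ∇_G·m = 0 with σ(0) = ρ⁰, σ(1) = ρ¹, and finite action ∫₀¹ Σ_{(i,j)∈E} F(g(σᵢ,σⱼ), m_{ij}) dt < ∞, where F(a,b) = b²/a for a > 0, F(0,0) = 0, F(0,b) = ∞ for b ≠ 0. Consequently the graph Wasserstein distance 𝒲(ρ⁰, ρ¹) is finite for all ρ⁰, ρ¹ ∈ P(G). -/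
/-!
Route the curve through the uniform distribution `μ`:
`σ(t) = μ + w(t) (ρ⁰ - μ) + w(1 - t) (ρ¹ - μ)` with `w(t) = (1 - t)³ (1 + 3t)` keeps the mass
`6 t² (1 - t)² μᵢ` on every vertex. On a connected graph every zero-sum vector is the weak
divergence of an edge flux (add up flows along paths), so `σ` is driven by a flux whose
coefficients vanish like `t (1 - t)`. Since `g(s, t) ≥ min(s, t)`, the quotient `m² / g` stays
bounded on `[0, 1]` and the action is finite.
-/

open Finset MeasureTheory

/-- The continuity equation `σ̇ + ∇_G·m = 0` on `[0,1]` in the sense of distributions. -/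
def ContEqM {n : ℕ} (ω : Fin n → Fin n → ℝ)
    (σ : ℝ → Fin n → ℝ) (m : ℝ → Fin n → Fin n → ℝ) : Prop :=
  ∀ φ φ' : ℝ → Fin n → ℝ, (∀ t, HasDerivAt φ (φ' t) t) → Continuous φ' →
    dotl2 (φ 1) (σ 1) - dotl2 (φ 0) (σ 0)
      - ∫ t in (0:ℝ)..1,
          (dotl2 (φ' t) (σ t)
            + (1/2) * ∑ i, ∑ j, (if ω i j ≠ 0 then gradG ω (φ t) i j * m t i j else 0)) = 0

/-- `F(a,b) = b²/a` for `a > 0`, `F(0,0) = 0`, `F(0,b) = ∞` for `b ≠ 0`. -/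
noncomputable def Fq (a b : ℝ) : ENNReal :=
  if 0 < a then ENNReal.ofReal (b^2 / a) else if b = 0 then 0 else ⊤

/-- The action `∫₀¹ ∑_{(i,j)∈E} F(g(σ_i,σ_j), m_{ij}) dt` of a curve `(σ, m)`. -/
noncomputable def mAction {n : ℕ} (ω : Fin n → Fin n → ℝ) (g : ℝ → ℝ → ℝ)
    (σ : ℝ → Fin n → ℝ) (m : ℝ → Fin n → Fin n → ℝ) : ENNReal :=
  ∫⁻ t in Set.Icc (0:ℝ) 1,
    ∑ i, ∑ j, (if ω i j ≠ 0 then Fq (g (σ t i) (σ t j)) (m t i j) else 0)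

/-- The squared graph Wasserstein distance `𝒲²(ρ⁰, ρ¹)`. -/
noncomputable def W2sq {n : ℕ} (ω : Fin n → Fin n → ℝ) (g : ℝ → ℝ → ℝ)
    (ρ0 ρ1 : Fin n → ℝ) : ENNReal :=
  ⨅ (σ : ℝ → Fin n → ℝ) (m : ℝ → Fin n → Fin n → ℝ) (_ : Continuous σ)
    (_ : ∀ t ∈ Set.Icc (0:ℝ) 1, IsProb (σ t)) (_ : ContEqM ω σ m)
    (_ : σ 0 = ρ0) (_ : σ 1 = ρ1),
    mAction ω g σ m

section Divergence

variable {n : ℕ} (ω : Fin n → Fin n → ℝ)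

noncomputable def edgePairing (φ : Fin n → ℝ) (f : Fin n → Fin n → ℝ) : ℝ :=
  (1/2) * ∑ i, ∑ j, (if ω i j ≠ 0 then gradG ω φ i j * f i j else 0)

lemma edgePairing_add (φ : Fin n → ℝ) (f f' : Fin n → Fin n → ℝ) :
    edgePairing ω φ (f + f') = edgePairing ω φ f + edgePairing ω φ f' := by
  simp only [edgePairing, ← mul_add, ← sum_add_distrib]
  congr 1
  refine sum_congr rfl fun i _ => sum_congr rfl fun j _ => ?_
  split_ifs <;> simp [mul_add]

lemma edgePairing_smul (φ : Fin n → ℝ) (c : ℝ) (f : Fin n → Fin n → ℝ) :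
    edgePairing ω φ (c • f) = c * edgePairing ω φ f := by
  simp only [edgePairing, Pi.smul_apply, smul_eq_mul, mul_sum, mul_ite, mul_zero]
  refine sum_congr rfl fun i _ => sum_congr rfl fun j _ => ?_
  split_ifs <;> ring

lemma edgePairing_single (φ : Fin n → ℝ) (a b : Fin n) (c : ℝ) :
    edgePairing ω φ (Pi.single a (Pi.single b c)) =
      (1/2) * (if ω a b ≠ 0 then gradG ω φ a b * c else 0) := by
  unfold edgePairing
  congr 1
  rw [sum_eq_single a (fun i _ hi => by simp [hi]) (by simp),
    sum_eq_single b (fun j _ hj => by simp [hj]) (by simp)]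
  simp

/-- The directions `v` with `v = -div f` in the weak sense for some edge flux `f`. -/
def divRange : Submodule ℝ (Fin n → ℝ) where
  carrier := {v | ∃ f, ∀ φ, dotl2 φ v = edgePairing ω φ f}
  add_mem' := by
    rintro v w ⟨f, hf⟩ ⟨f', hf'⟩
    exact ⟨f + f', fun φ => by
      rw [edgePairing_add, ← hf, ← hf']; exact dotProduct_add φ v w⟩
  zero_mem' := ⟨0, fun φ => by simp [dotl2, edgePairing]⟩
  smul_mem' := by
    rintro c v ⟨f, hf⟩
    exact ⟨c • f, fun φ => by
      rw [edgePairing_smul, ← hf]; exact dotProduct_smul c φ v⟩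

variable {ω}

lemma single_sub_single_mem_divRange_of_pos {a b : Fin n} (hab : 0 < ω a b) :
    Pi.single b 1 - Pi.single a 1 ∈ divRange ω := by
  refine ⟨Pi.single a (Pi.single b (-2 / √(ω a b))), fun φ => ?_⟩
  have hsqrt : √(ω a b) ≠ 0 := (Real.sqrt_pos.2 hab).ne'
  rw [edgePairing_single, if_pos hab.ne']
  simp only [dotl2, gradG, Pi.sub_apply, mul_sub, sum_sub_distrib, Pi.single_apply, mul_ite,
    mul_one, mul_zero, sum_ite_eq', mem_univ, if_true]
  field_simp
  ring

lemma single_sub_single_mem_divRange (hω : ∀ i j, 0 ≤ ω i j) {a b : Fin n}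
    (hab : Relation.ReflTransGen (fun i j => ω i j ≠ 0) a b) :
    Pi.single b 1 - Pi.single a 1 ∈ divRange ω := by
  induction hab with
  | refl => simp
  | @tail b c _ hbc ih =>
    rw [← sub_add_sub_cancel _ (Pi.single b 1)]
    exact add_mem (single_sub_single_mem_divRange_of_pos ((hω b c).lt_of_ne' hbc)) ih

lemma mem_divRange_of_sum_eq_zero (hω : ∀ i j, 0 ≤ ω i j)
    (hconn : ∀ i j : Fin n, Relation.ReflTransGen (fun a b => ω a b ≠ 0) i j)
    {v : Fin n → ℝ} (hv : ∑ i, v i = 0) : v ∈ divRange ω := by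
  cases isEmpty_or_nonempty (Fin n) with
  | inl _ => simp [Subsingleton.elim v 0]
  | inr h =>
    obtain ⟨i₀⟩ := h
    have hdecomp : v = ∑ k, v k • (Pi.single k 1 - Pi.single i₀ 1) := by
      ext j
      simp [Finset.sum_apply, Pi.single_apply, mul_sub, sum_sub_distrib, hv]
    rw [hdecomp]
    exact sum_mem fun k _ =>
      Submodule.smul_mem _ _ (single_sub_single_mem_divRange hω (hconn i₀ k))

end Divergence

section ContinuityEquation

variable {n : ℕ}

lemma HasDerivAt.dotl2 {φ σ : ℝ → Fin n → ℝ} {φ' σ' : Fin n → ℝ} {t : ℝ}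
    (hφ : HasDerivAt φ φ' t) (hσ : HasDerivAt σ σ' t) :
    HasDerivAt (fun s => dotl2 (φ s) (σ s)) (dotl2 φ' (σ t) + dotl2 (φ t) σ') t := by
  simp only [_root_.dotl2, ← sum_add_distrib]
  exact HasDerivAt.fun_sum fun i _ => (hasDerivAt_pi.1 hφ i).mul (hasDerivAt_pi.1 hσ i)

lemma contEqM_of_hasDerivAt {ω : Fin n → Fin n → ℝ} {σ σ' : ℝ → Fin n → ℝ}
    {m : ℝ → Fin n → Fin n → ℝ} (hσ : ∀ t, HasDerivAt σ (σ' t) t) (hσ' : Continuous σ')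
    (hm : ∀ t φ, dotl2 φ (σ' t) = edgePairing ω φ (m t)) : ContEqM ω σ m := by
  intro φ φ' hφ hφ'
  have hσc : Continuous σ := continuous_iff_continuousAt.2 fun t => (hσ t).continuousAt
  have hφc : Continuous φ := continuous_iff_continuousAt.2 fun t => (hφ t).continuousAt
  have hcont : Continuous fun t => dotl2 (φ' t) (σ t) + dotl2 (φ t) (σ' t) := by
    unfold dotl2; fun_prop
  change _ - ∫ t in (0:ℝ)..1, (dotl2 (φ' t) (σ t) + edgePairing ω (φ t) (m t)) = 0
  simp only [← hm]
  rw [intervalIntegral.integral_eq_sub_of_hasDerivAt (fun t _ => (hφ t).dotl2 (hσ t))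
    (hcont.intervalIntegrable 0 1), sub_self]

end ContinuityEquation

def bridgeWeight (t : ℝ) : ℝ := (1 - t) ^ 3 * (1 + 3 * t)

lemma hasDerivAt_bridgeWeight (t : ℝ) :
    HasDerivAt bridgeWeight (-12 * t * (1 - t) ^ 2) t := by
  have h := (((hasDerivAt_id t).const_sub 1).pow 3).mul
    (((hasDerivAt_id t).const_mul 3).const_add 1)
  exact h.congr_deriv (by simp only [id, Pi.pow_apply]; ring)

lemma hasDerivAt_bridgeWeight_one_sub (t : ℝ) :
    HasDerivAt (fun s => bridgeWeight (1 - s)) (12 * t ^ 2 * (1 - t)) t :=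
  ((hasDerivAt_bridgeWeight (1 - t)).comp t ((hasDerivAt_id t).const_sub 1)).congr_deriv
    (by ring)

lemma bridgeWeight_nonneg {t : ℝ} (h0 : 0 ≤ t) (h1 : t ≤ 1) : 0 ≤ bridgeWeight t := by
  have := sub_nonneg.2 h1
  unfold bridgeWeight
  positivity

lemma bridgeWeight_add_bridgeWeight_one_sub (t : ℝ) :
    bridgeWeight t + bridgeWeight (1 - t) = 1 - 6 * t ^ 2 * (1 - t) ^ 2 := by
  unfold bridgeWeight
  ring

section Bridge

variable {n : ℕ} (μ ρ0 ρ1 : Fin n → ℝ) (f0 f1 : Fin n → Fin n → ℝ)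

noncomputable def bridgeCurve (t : ℝ) : Fin n → ℝ :=
  μ + bridgeWeight t • (ρ0 - μ) + bridgeWeight (1 - t) • (ρ1 - μ)

noncomputable def bridgeFlux (t : ℝ) : Fin n → Fin n → ℝ :=
  (-12 * t * (1 - t) ^ 2) • f0 + (12 * t ^ 2 * (1 - t)) • f1

lemma bridgeCurve_zero : bridgeCurve μ ρ0 ρ1 0 = ρ0 := by
  ext i; simp [bridgeCurve, bridgeWeight]

lemma bridgeCurve_one : bridgeCurve μ ρ0 ρ1 1 = ρ1 := by
  ext i; simp [bridgeCurve, bridgeWeight]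

lemma bridgeCurve_apply (t : ℝ) (i : Fin n) :
    bridgeCurve μ ρ0 ρ1 t i =
      bridgeWeight t * ρ0 i + bridgeWeight (1 - t) * ρ1 i + 6 * t ^ 2 * (1 - t) ^ 2 * μ i := by
  simp only [bridgeCurve, Pi.add_apply, Pi.smul_apply, Pi.sub_apply, smul_eq_mul]
  linear_combination (-μ i) * bridgeWeight_add_bridgeWeight_one_sub t

lemma continuous_bridgeCurve : Continuous (bridgeCurve μ ρ0 ρ1) := by
  have : Continuous bridgeWeight := by unfold bridgeWeight; fun_prop
  unfold bridgeCurve; fun_prop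

lemma hasDerivAt_bridgeCurve (t : ℝ) :
    HasDerivAt (bridgeCurve μ ρ0 ρ1)
      ((-12 * t * (1 - t) ^ 2) • (ρ0 - μ) + (12 * t ^ 2 * (1 - t)) • (ρ1 - μ)) t := by
  unfold bridgeCurve
  simpa [add_assoc] using ((hasDerivAt_bridgeWeight t).smul_const (ρ0 - μ)).add
    ((hasDerivAt_bridgeWeight_one_sub t).smul_const (ρ1 - μ)) |>.const_add μ

variable {μ ρ0 ρ1}

lemma isProb_bridgeCurve (hμ : IsProb μ) (hρ0 : IsProb ρ0) (hρ1 : IsProb ρ1) {t : ℝ}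
    (ht : t ∈ Set.Icc (0:ℝ) 1) : IsProb (bridgeCurve μ ρ0 ρ1 t) := by
  refine ⟨fun i => ?_, ?_⟩
  · rw [bridgeCurve_apply]
    have := bridgeWeight_nonneg ht.1 ht.2
    have := bridgeWeight_nonneg (sub_nonneg.2 ht.2) (sub_le_self 1 ht.1)
    have := hρ0.1 i; have := hρ1.1 i; have := hμ.1 i
    positivity
  · simp [bridgeCurve, sum_add_distrib, ← mul_sum, sum_sub_distrib, hμ.2, hρ0.2, hρ1.2]

lemma mul_le_bridgeCurve {κ : ℝ} (hμ : ∀ i, κ ≤ μ i) (hρ0 : ∀ i, 0 ≤ ρ0 i)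
    (hρ1 : ∀ i, 0 ≤ ρ1 i) {t : ℝ} (ht : t ∈ Set.Icc (0:ℝ) 1) (i : Fin n) :
    6 * t ^ 2 * (1 - t) ^ 2 * κ ≤ bridgeCurve μ ρ0 ρ1 t i := by
  rw [bridgeCurve_apply]
  have := mul_nonneg (bridgeWeight_nonneg ht.1 ht.2) (hρ0 i)
  have := mul_nonneg (bridgeWeight_nonneg (sub_nonneg.2 ht.2) (sub_le_self 1 ht.1)) (hρ1 i)
  have := mul_le_mul_of_nonneg_left (hμ i) (by positivity : 0 ≤ 6 * t ^ 2 * (1 - t) ^ 2)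
  linarith

variable {f0 f1}

lemma contEqM_bridgeCurve {ω : Fin n → Fin n → ℝ}
    (hf0 : ∀ φ, dotl2 φ (ρ0 - μ) = edgePairing ω φ f0)
    (hf1 : ∀ φ, dotl2 φ (ρ1 - μ) = edgePairing ω φ f1) :
    ContEqM ω (bridgeCurve μ ρ0 ρ1) (bridgeFlux f0 f1) := by
  refine contEqM_of_hasDerivAt (hasDerivAt_bridgeCurve μ ρ0 ρ1) (by fun_prop) fun t φ => ?_
  rw [bridgeFlux, edgePairing_add, edgePairing_smul, edgePairing_smul, ← hf0, ← hf1]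
  change dotProduct φ (_ + _) = _
  rw [dotProduct_add, dotProduct_smul, dotProduct_smul]
  rfl

lemma sq_bridgeFlux_le {t : ℝ} (ht : t ∈ Set.Icc (0:ℝ) 1) (i j : Fin n) :
    bridgeFlux f0 f1 t i j ^ 2 ≤ 144 * t ^ 2 * (1 - t) ^ 2 * (|f0 i j| + |f1 i j|) ^ 2 := by
  obtain ⟨h0, h1⟩ := ht
  have hbound : |bridgeFlux f0 f1 t i j| ≤ 12 * t * (1 - t) * (|f0 i j| + |f1 i j|) := by
    simp only [bridgeFlux, Pi.add_apply, Pi.smul_apply, smul_eq_mul]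
    refine (abs_add_le _ _).trans ?_
    rw [abs_mul (-12 * t * (1 - t) ^ 2), abs_mul (12 * t ^ 2 * (1 - t)), mul_add]
    have htt : 0 ≤ t * (1 - t) := mul_nonneg h0 (sub_nonneg.2 h1)
    gcongr
    · rw [abs_of_nonpos (by nlinarith [sq_nonneg (1 - t)])]
      nlinarith [mul_nonneg htt h0]
    · rw [abs_of_nonneg (by positivity)]
      nlinarith [mul_nonneg htt (sub_nonneg.2 h1)]
  calc bridgeFlux f0 f1 t i j ^ 2 ≤ (12 * t * (1 - t) * (|f0 i j| + |f1 i j|)) ^ 2 :=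
        sq_le_sq' (neg_le_of_abs_le hbound) (le_of_abs_le hbound)
    _ = _ := by ring

end Bridge

lemma Fq_le_ofReal {a b C : ℝ} (hC : 0 ≤ C) (h : b ^ 2 ≤ C * a) : Fq a b ≤ ENNReal.ofReal C := by
  unfold Fq
  split_ifs with ha hb
  · exact ENNReal.ofReal_le_ofReal ((div_le_iff₀ ha).2 h)
  · exact zero_le
  · have : b ^ 2 ≤ 0 := h.trans (mul_nonpos_of_nonneg_of_nonpos hC (not_lt.1 ha))
    exact absurd (pow_eq_zero_iff two_ne_zero |>.1 (le_antisymm this (sq_nonneg b))) hb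

section Action

variable {n : ℕ} {ω : Fin n → Fin n → ℝ} {g : ℝ → ℝ → ℝ}

lemma mAction_lt_top_of_le {σ : ℝ → Fin n → ℝ} {m : ℝ → Fin n → Fin n → ℝ}
    (C : Fin n → Fin n → ℝ)
    (h : ∀ t ∈ Set.Icc (0:ℝ) 1, ∀ i j, Fq (g (σ t i) (σ t j)) (m t i j) ≤ ENNReal.ofReal (C i j)) :
    mAction ω g σ m < ⊤ := by
  calc mAction ω g σ m ≤ ∫⁻ _ in Set.Icc (0:ℝ) 1, ∑ i, ∑ j, ENNReal.ofReal (C i j) :=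
        setLIntegral_mono measurable_const fun t ht =>
          sum_le_sum fun i _ => sum_le_sum fun j _ => by
            split_ifs
            exacts [h t ht i j, zero_le]
    _ < ⊤ := by
        rw [setLIntegral_const, Real.volume_Icc]
        exact ENNReal.mul_lt_top (by simp [ENNReal.sum_lt_top]) ENNReal.ofReal_lt_top

lemma W2sq_le_mAction {ρ0 ρ1 : Fin n → ℝ} {σ : ℝ → Fin n → ℝ} {m : ℝ → Fin n → Fin n → ℝ}
    (hσ : Continuous σ) (hprob : ∀ t ∈ Set.Icc (0:ℝ) 1, IsProb (σ t)) (hce : ContEqM ω σ m)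
    (h0 : σ 0 = ρ0) (h1 : σ 1 = ρ1) : W2sq ω g ρ0 ρ1 ≤ mAction ω g σ m :=
  iInf_le_of_le σ <| iInf_le_of_le m <| iInf_le_of_le hσ <| iInf_le_of_le hprob <|
    iInf_le_of_le hce <| iInf_le_of_le h0 <| iInf_le_of_le h1 le_rfl

lemma mAction_bridgeCurve_lt_top
    (hg : ∀ s t : ℝ, 0 ≤ s → 0 ≤ t → min s t ≤ g s t)
    {μ ρ0 ρ1 : Fin n → ℝ} {κ : ℝ} (hκ : 0 < κ) (hμ : ∀ i, κ ≤ μ i)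
    (hρ0 : ∀ i, 0 ≤ ρ0 i) (hρ1 : ∀ i, 0 ≤ ρ1 i) (f0 f1 : Fin n → Fin n → ℝ) :
    mAction ω g (bridgeCurve μ ρ0 ρ1) (bridgeFlux f0 f1) < ⊤ := by
  refine mAction_lt_top_of_le (fun i j => 24 * (|f0 i j| + |f1 i j|) ^ 2 / κ)
    fun t ht i j => Fq_le_ofReal (by positivity) ?_
  have hlow := mul_le_bridgeCurve hμ hρ0 hρ1 ht
  have hσg : 6 * t ^ 2 * (1 - t) ^ 2 * κ ≤ g (bridgeCurve μ ρ0 ρ1 t i) (bridgeCurve μ ρ0 ρ1 t j) :=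
    (le_min (hlow i) (hlow j)).trans
      (hg _ _ ((by positivity : (0:ℝ) ≤ _).trans (hlow i))
        ((by positivity : (0:ℝ) ≤ _).trans (hlow j)))
  calc bridgeFlux f0 f1 t i j ^ 2
      ≤ 144 * t ^ 2 * (1 - t) ^ 2 * (|f0 i j| + |f1 i j|) ^ 2 := sq_bridgeFlux_le ht i j
    _ = 24 * (|f0 i j| + |f1 i j|) ^ 2 / κ * (6 * t ^ 2 * (1 - t) ^ 2 * κ) := by
        field_simp; ring
    _ ≤ _ := by gcongr

end Action

theorem stmt6_general {n : ℕ} (ω : Fin n → Fin n → ℝ) (g : ℝ → ℝ → ℝ)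
    (hωnonneg : ∀ i j, 0 ≤ ω i j)
    (hconn : ∀ i j : Fin n, Relation.ReflTransGen (fun a b => ω a b ≠ 0) i j)
    (hgbd : ∀ s t : ℝ, 0 ≤ s → 0 ≤ t → min s t ≤ g s t ∧ g s t ≤ max s t)
    (ρ0 ρ1 : Fin n → ℝ) (hρ0 : IsProb ρ0) (hρ1 : IsProb ρ1) :
    (∃ (σ : ℝ → Fin n → ℝ) (m : ℝ → Fin n → Fin n → ℝ),
      Continuous σ ∧ (∀ t ∈ Set.Icc (0:ℝ) 1, IsProb (σ t)) ∧ ContEqM ω σ m ∧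
      σ 0 = ρ0 ∧ σ 1 = ρ1 ∧ mAction ω g σ m < ⊤) ∧
    W2sq ω g ρ0 ρ1 < ⊤ := by
  have hn : 0 < (n : ℝ) := Nat.cast_pos.2 <| Nat.pos_of_ne_zero <| by
    rintro rfl; simpa using hρ0.2
  set μ : Fin n → ℝ := fun _ => 1 / n
  have hμ : IsProb μ := ⟨fun _ => by positivity, by simp [μ, hn.ne']⟩
  have hdiv : ∀ ρ, IsProb ρ → ρ - μ ∈ divRange ω := fun ρ hρ =>
    mem_divRange_of_sum_eq_zero hωnonneg hconn (by simp [sum_sub_distrib, hρ.2, hμ.2])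
  obtain ⟨f0, hf0⟩ := hdiv ρ0 hρ0
  obtain ⟨f1, hf1⟩ := hdiv ρ1 hρ1
  have hfin : mAction ω g (bridgeCurve μ ρ0 ρ1) (bridgeFlux f0 f1) < ⊤ :=
    mAction_bridgeCurve_lt_top (fun s t hs ht => (hgbd s t hs ht).1) (by positivity)
      (fun _ => le_rfl) hρ0.1 hρ1.1 f0 f1
  have hprob := fun t (ht : t ∈ Set.Icc (0:ℝ) 1) => isProb_bridgeCurve hμ hρ0 hρ1 ht
  have hce := contEqM_bridgeCurve (ω := ω) hf0 hf1
  refine ⟨⟨_, _, continuous_bridgeCurve μ ρ0 ρ1, hprob, hce, bridgeCurve_zero μ ρ0 ρ1,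
    bridgeCurve_one μ ρ0 ρ1, hfin⟩, ?_⟩
  exact (W2sq_le_mAction (continuous_bridgeCurve μ ρ0 ρ1) hprob hce
    (bridgeCurve_zero μ ρ0 ρ1) (bridgeCurve_one μ ρ0 ρ1)).trans_lt hfin

/-- existence of finite-action curves between arbitrary probability vectors,
hence finiteness of the graph Wasserstein distance. -/
theorem stmt6 {n : ℕ} (ω : Fin n → Fin n → ℝ) (g : ℝ → ℝ → ℝ)
    (hωsym : ∀ i j, ω i j = ω j i) (hωnonneg : ∀ i j, 0 ≤ ω i j)
    (hconn : ∀ i j : Fin n, Relation.ReflTransGen (fun a b => ω a b ≠ 0) i j)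
    (hgsym : ∀ s t, g s t = g t s)
    (hgcont : Continuous fun p : ℝ × ℝ => g p.1 p.2)
    (hgconc : ∀ a b : ℝ × ℝ, ∀ lam ∈ Set.Icc (0:ℝ) 1,
      (1 - lam) * g a.1 a.2 + lam * g b.1 b.2
        ≤ g ((1 - lam) * a.1 + lam * b.1) ((1 - lam) * a.2 + lam * b.2))
    (hgbd : ∀ s t : ℝ, 0 ≤ s → 0 ≤ t → min s t ≤ g s t ∧ g s t ≤ max s t)
    (hgint : ∫⁻ r in Set.Icc (0:ℝ) 1, ENNReal.ofReal (1 / Real.sqrt (g r (1 - r))) < ⊤)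
    (ρ0 ρ1 : Fin n → ℝ) (hρ0 : IsProb ρ0) (hρ1 : IsProb ρ1) :
    (∃ (σ : ℝ → Fin n → ℝ) (m : ℝ → Fin n → Fin n → ℝ),
      Continuous σ ∧ (∀ t ∈ Set.Icc (0:ℝ) 1, IsProb (σ t)) ∧ ContEqM ω σ m ∧
      σ 0 = ρ0 ∧ σ 1 = ρ1 ∧ mAction ω g σ m < ⊤) ∧
    W2sq ω g ρ0 ρ1 < ⊤ :=
  stmt6_general ω g hωnonneg hconn hgbd ρ0 ρ1 hρ0 hρ1
end

section
/- Take the logarithmic mean metric tensor g(s,t) = (s−t)/(log s − log t) for s ≠ t with st ≠ 0, g(s,s) = s, g(s,t) = 0 if st = 0. Then for every μ ∈ P₀(G), div_μ(∇_G log μ) = Aμ, where A is the graph Laplacian matrix defined by A_{ij} = ω_{ij} for j ∈ N(i), A_{ii} = −Σ_{k∈N(i)} ω_{ik}, A_{ij} = 0 otherwise. -/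
open Finset MeasureTheory

/-- The logarithmic mean: `g(s,t) = (s-t)/(log s - log t)` for `s ≠ t`, `st ≠ 0`;
`g(s,s) = s`; `g(s,t) = 0` if `st = 0`. -/
noncomputable def logMean (s t : ℝ) : ℝ :=
  if s * t = 0 then 0 else if s = t then s else (s - t) / (Real.log s - Real.log t)

/-!
With the logarithmic mean, `g(μᵢ, μⱼ) (log μⱼ - log μᵢ) = μⱼ - μᵢ`, and the two square roots
`√ωᵢⱼ √ωⱼᵢ` recombine to `ωᵢⱼ` by symmetry of the weights. Hence the `i`-th entry of
`div_μ (∇_G log μ)` is `∑ⱼ ωᵢⱼ (μⱼ - μᵢ)`, which is the `i`-th entry of `Aμ`.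
-/

theorem logMean_mul_log_sub_log {s t : ℝ} (hs : 0 < s) (ht : 0 < t) :
    logMean s t * (Real.log t - Real.log s) = t - s := by
  rcases eq_or_ne s t with rfl | hst
  · simp
  have hlog : Real.log s - Real.log t ≠ 0 :=
    sub_ne_zero.2 fun h => hst (Real.log_injOn_pos hs ht h)
  rw [logMean, if_neg (by positivity), if_neg hst, ← neg_sub (Real.log s), mul_neg,
    div_mul_cancel₀ _ hlog, neg_sub]

theorem gdiv_gradG {n : ℕ} {ω : Fin n → Fin n → ℝ} (hωsym : ∀ i j, ω i j = ω j i)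
    (hωnonneg : ∀ i j, 0 ≤ ω i j) (g : ℝ → ℝ → ℝ) (ρ φ : Fin n → ℝ) (i : Fin n) :
    gdiv ω g ρ (gradG ω φ) i = ∑ j, ω i j * (g (ρ i) (ρ j) * (φ j - φ i)) := by
  refine Finset.sum_congr rfl fun j _ => ?_
  have hsqrt : Real.sqrt (ω i j) * Real.sqrt (ω j i) = ω i j := by
    rw [← hωsym i j, Real.mul_self_sqrt (hωnonneg i j)]
  simp only [gradG]
  linear_combination (g (ρ i) (ρ j) * (φ j - φ i)) * hsqrt

theorem mulVec_eq_sum_mul_sub {n : ℕ} {ω : Fin n → Fin n → ℝ} (hdiag : ∀ i, ω i i = 0)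
    {A : Matrix (Fin n) (Fin n) ℝ} (hA : ∀ i j, A i j = if i = j then -(∑ k, ω i k) else ω i j)
    (μ : Fin n → ℝ) (i : Fin n) :
    A.mulVec μ i = ∑ j, ω i j * (μ j - μ i) := by
  have hrow : A i = fun j => ω i j - if i = j then ∑ k, ω i k else 0 := by
    ext j
    rw [hA]
    split_ifs with h
    · subst h; rw [hdiag]; ring
    · ring
  simp only [Matrix.mulVec, dotProduct, hrow, sub_mul, mul_sub, Finset.sum_sub_distrib,
    ite_mul, zero_mul, Finset.sum_ite_eq, Finset.mem_univ, if_true, Finset.sum_mul]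

theorem stmt13_general {n : ℕ} (ω : Fin n → Fin n → ℝ)
    (hωsym : ∀ i j, ω i j = ω j i) (hωnonneg : ∀ i j, 0 ≤ ω i j)
    (hdiag : ∀ i, ω i i = 0)
    (A : Matrix (Fin n) (Fin n) ℝ)
    (hA : ∀ i j, A i j = if i = j then -(∑ k, ω i k) else ω i j)
    (μ : Fin n → ℝ) (hμpos : ∀ i, 0 < μ i) :
    gdiv ω logMean μ (gradG ω (fun i => Real.log (μ i))) = A.mulVec μ := by
  funext i
  rw [gdiv_gradG hωsym hωnonneg, mulVec_eq_sum_mul_sub hdiag hA]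
  refine Finset.sum_congr rfl fun j _ => ?_
  rw [logMean_mul_log_sub_log (hμpos i) (hμpos j)]

/-- with the logarithmic-mean tensor, `div_μ(∇_G log μ) = Aμ` on `P₀(G)`,
`A` being the graph Laplacian. -/
theorem stmt13 {n : ℕ} (ω : Fin n → Fin n → ℝ)
    (hωsym : ∀ i j, ω i j = ω j i) (hωnonneg : ∀ i j, 0 ≤ ω i j)
    (hdiag : ∀ i, ω i i = 0)
    (A : Matrix (Fin n) (Fin n) ℝ)
    (hA : ∀ i j, A i j = if i = j then -(∑ k, ω i k) else ω i j)
    (μ : Fin n → ℝ) (hμ : IsProb μ) (hμpos : ∀ i, 0 < μ i) :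
    gdiv ω logMean μ (gradG ω (fun i => Real.log (μ i))) = A.mulVec μ :=
  stmt13_general ω hωsym hωnonneg hdiag A hA μ hμpos
end
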